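/- arXiv:2112.07369 — 7 statements merged into one kernel-verified Lean document; each statement's English description precedes it below -/
import Mathlib

section
/- Let L ∈ ℕ, (ℓ_k) ⊆ ℕ, θ ∈ ℝ^d with associated weight matrices w^{k,θ} and bias vectors b^{k,θ}, let a ∈ ℝ, b ∈ (a,∞), 𝐚 = max{|a|,|b|,1}, and let N^{k,θ}: ℝ^{ℓ₀} → ℝ^{ℓ_k} denote the ReLU realization up to layer k: N^{1,θ}(x) = b^{1,θ} + w^{1,θ}x and N^{k+1,θ}(x) = b^{k+1,θ} + w^{k+1,θ}·ReLU(N^{k,θ}(x)) (ReLU applied componentwise). For k ∈ ℕ and i ≤ ℓ_k let Q_{k,i} = |b^{k,θ}_i|² + Σ_{j=1}^{ℓ_{k-1}} |w^{k,θ}_{i,j}|², and let 𝒬₀ = 1, 𝒬_k = 1 + Σ_{i=1}^{ℓ_k} Q_{k,i}. Then for all k ∈ {1,…,L}, i ∈ {1,…,ℓ_k}, and x ∈ [a,b]^{ℓ₀} it holds that |max{N^{k,θ}_i(x), 0}|² ≤ |N^{k,θ}_i(x)|² ≤ 𝐚² Q_{k,i} ∏_{p=0}^{k-1}((ℓ_p+1)𝒬_p).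 -/
lemma cs_aux (n : ℕ) (c : ℝ) (f g : ℕ → ℝ) :
    (c + ∑ j ∈ Finset.range n, f j * g j)^2 ≤
    (c^2 + ∑ j ∈ Finset.range n, (f j)^2) * (1 + ∑ j ∈ Finset.range n, (g j)^2) := by
  have h := Finset.sum_mul_sq_le_sq_mul_sq (Finset.range (n+1))
    (fun j => if j = n then c else f j) (fun j => if j = n then 1 else g j)
  have e1 : ∑ j ∈ Finset.range (n+1),
      (if j = n then c else f j) * (if j = n then 1 else g j)
      = c + ∑ j ∈ Finset.range n, f j * g j := by
    rw [Finset.sum_range_succ, if_pos rfl, if_pos rfl,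
      Finset.sum_congr rfl (g := fun j => f j * g j)
        (fun j hj => by rw [if_neg (Finset.mem_range.mp hj).ne, if_neg (Finset.mem_range.mp hj).ne])]
    ring
  have e2 : ∑ j ∈ Finset.range (n+1), (if j = n then c else f j)^2
      = c^2 + ∑ j ∈ Finset.range n, (f j)^2 := by
    rw [Finset.sum_range_succ, if_pos rfl,
      Finset.sum_congr rfl (g := fun j => (f j)^2)
        (fun j hj => by rw [if_neg (Finset.mem_range.mp hj).ne])]
    ring
  have e3 : ∑ j ∈ Finset.range (n+1), (if j = n then (1:ℝ) else g j)^2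
      = 1 + ∑ j ∈ Finset.range n, (g j)^2 := by
    rw [Finset.sum_range_succ, if_pos rfl,
      Finset.sum_congr rfl (g := fun j => (g j)^2)
        (fun j hj => by rw [if_neg (Finset.mem_range.mp hj).ne])]
    ring
  rw [e1, e2, e3] at h
  exact h


/-- Layerwise growth bound for the pre-activations of a deep ReLU network on the cube
`[a,b]^{ℓ₀}`: for every layer `k` and neuron `i`,
`|max{N^k_i(x),0}|² ≤ |N^k_i(x)|² ≤ ca² Q_{k,i} ∏_{p=0}^{k-1}((ℓ_p+1)𝒬_p)`.
Here `N k` denotes the realization up to layer `k+1` (pre-activation), `w k`/`bv k` the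
weights and biases of layer `k+1`, `Q k i` the squared parameter norm of neuron `i` of
layer `k+1`, and `Qc` the cumulative quantities `𝒬₀ = 1`, `𝒬_{k+1} = 1 + Σ_i Q_{k,i}`. -/
theorem stmt_10 (L : ℕ) (hL : 0 < L) (ℓ : ℕ → ℕ) (a b : ℝ) (hab : a < b)
    (ca : ℝ) (hca : ca = max (max |a| |b|) 1)
    (w : ℕ → ℕ → ℕ → ℝ) (bv : ℕ → ℕ → ℝ)
    (N : ℕ → (ℕ → ℝ) → ℕ → ℝ)
    (hN0 : ∀ (x : ℕ → ℝ) (i : ℕ),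
      N 0 x i = bv 0 i + ∑ j ∈ Finset.range (ℓ 0), w 0 i j * x j)
    (hNs : ∀ (k : ℕ) (x : ℕ → ℝ) (i : ℕ),
      N (k+1) x i = bv (k+1) i + ∑ j ∈ Finset.range (ℓ (k+1)), w (k+1) i j * max (N k x j) 0)
    (Q : ℕ → ℕ → ℝ)
    (hQ : ∀ k i, Q k i = (bv k i)^2 + ∑ j ∈ Finset.range (ℓ k), (w k i j)^2)
    (Qc : ℕ → ℝ) (hQc0 : Qc 0 = 1)
    (hQcs : ∀ k, Qc (k+1) = 1 + ∑ i ∈ Finset.range (ℓ (k+1)), Q k i) :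
    ∀ k < L, ∀ i < ℓ (k+1), ∀ x : ℕ → ℝ, (∀ j < ℓ 0, x j ∈ Set.Icc a b) →
      (max (N k x i) 0)^2 ≤ (N k x i)^2 ∧
      (N k x i)^2 ≤ ca^2 * Q k i * ∏ p ∈ Finset.range (k+1), (((ℓ p : ℝ) + 1) * Qc p) := by
  have hca1 : (1:ℝ) ≤ ca := hca ▸ le_max_right _ _
  have hca0 : (0:ℝ) ≤ ca := le_trans zero_le_one hca1
  have hca2 : (1:ℝ) ≤ ca^2 := by nlinarith
  have hQnn : ∀ k i, 0 ≤ Q k i := by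
    intro k i; rw [hQ]; positivity
  have hQc1 : ∀ k, 1 ≤ Qc k := by
    intro k
    cases k with
    | zero => rw [hQc0]
    | succ k =>
      rw [hQcs]
      have : 0 ≤ ∑ i ∈ Finset.range (ℓ (k+1)), Q k i :=
        Finset.sum_nonneg fun i _ => hQnn k i
      linarith
  have hprod1 : ∀ k, (1:ℝ) ≤ ∏ p ∈ Finset.range k, (((ℓ p : ℝ) + 1) * Qc p) := by
    intro k
    induction k with
    | zero => simp
    | succ n ih =>
      rw [Finset.prod_range_succ]
      have h0 : (0:ℝ) ≤ (ℓ n : ℝ) := Nat.cast_nonneg _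
      have h1 : (1:ℝ) ≤ ((ℓ n : ℝ) + 1) * Qc n := by nlinarith [hQc1 n]
      nlinarith [mul_le_mul ih h1 zero_le_one (le_trans zero_le_one ih)]
  have hmax : ∀ t : ℝ, (max t 0)^2 ≤ t^2 := by
    intro t
    rcases le_or_gt t 0 with h | h
    · rw [max_eq_right h]; simpa using sq_nonneg t
    · rw [max_eq_left h.le]
  -- main induction
  have main : ∀ k, ∀ i < ℓ (k+1), ∀ x : ℕ → ℝ, (∀ j < ℓ 0, x j ∈ Set.Icc a b) →
      (N k x i)^2 ≤ ca^2 * Q k i * ∏ p ∈ Finset.range (k+1), (((ℓ p : ℝ) + 1) * Qc p) := by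
    intro k
    induction k with
    | zero =>
      intro i hi x hx
      rw [hN0]
      have h1 := cs_aux (ℓ 0) (bv 0 i) (fun j => w 0 i j) x
      have hx2 : ∀ j ∈ Finset.range (ℓ 0), (x j)^2 ≤ ca^2 := by
        intro j hj
        have hj' := hx j (Finset.mem_range.mp hj)
        have : |x j| ≤ ca := by
          rw [hca, abs_le]
          constructor
          · calc -(max (max |a| |b|) 1) ≤ -|a| := by
                  apply neg_le_neg; exact le_max_of_le_left (le_max_left _ _)
              _ ≤ a := neg_abs_le a
              _ ≤ x j := hj'.1
          · calc x j ≤ b := hj'.2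
              _ ≤ |b| := le_abs_self b
              _ ≤ max (max |a| |b|) 1 := le_max_of_le_left (le_max_right _ _)
        calc (x j)^2 = |x j|^2 := (sq_abs _).symm
          _ ≤ ca^2 := by nlinarith [abs_nonneg (x j)]
      have h2 : ∑ j ∈ Finset.range (ℓ 0), (x j)^2 ≤ (ℓ 0 : ℝ) * ca^2 := by
        calc ∑ j ∈ Finset.range (ℓ 0), (x j)^2 ≤ ∑ _j ∈ Finset.range (ℓ 0), ca^2 :=
              Finset.sum_le_sum hx2
          _ = (ℓ 0 : ℝ) * ca^2 := by simp [mul_comm]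
      have h3 : (1:ℝ) + ∑ j ∈ Finset.range (ℓ 0), (x j)^2 ≤ ((ℓ 0 : ℝ) + 1) * ca^2 := by
        nlinarith
      have hQ0 : Q 0 i = (bv 0 i)^2 + ∑ j ∈ Finset.range (ℓ 0), (w 0 i j)^2 := hQ 0 i
      calc (bv 0 i + ∑ j ∈ Finset.range (ℓ 0), w 0 i j * x j)^2
          ≤ ((bv 0 i)^2 + ∑ j ∈ Finset.range (ℓ 0), (w 0 i j)^2)
            * (1 + ∑ j ∈ Finset.range (ℓ 0), (x j)^2) := h1
        _ ≤ Q 0 i * (((ℓ 0 : ℝ) + 1) * ca^2) := by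
            rw [hQ0]
            apply mul_le_mul_of_nonneg_left h3
            rw [← hQ0]; exact hQnn 0 i
        _ = ca^2 * Q 0 i * ∏ p ∈ Finset.range 1, (((ℓ p : ℝ) + 1) * Qc p) := by
            rw [Finset.prod_range_one, hQc0]; ring
    | succ k ih =>
      intro i hi x hx
      rw [hNs]
      have h1 := cs_aux (ℓ (k+1)) (bv (k+1) i) (fun j => w (k+1) i j)
        (fun j => max (N k x j) 0)
      set P := ∏ p ∈ Finset.range (k+1), (((ℓ p : ℝ) + 1) * Qc p) with hP
      have hP1 : (1:ℝ) ≤ P := hprod1 (k+1)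
      have h2 : ∀ j ∈ Finset.range (ℓ (k+1)), (max (N k x j) 0)^2 ≤ ca^2 * Q k j * P := by
        intro j hj
        exact le_trans (hmax _) (ih j (Finset.mem_range.mp hj) x hx)
      have h3 : (1:ℝ) + ∑ j ∈ Finset.range (ℓ (k+1)), (max (N k x j) 0)^2
          ≤ ca^2 * P * Qc (k+1) := by
        have hs : ∑ j ∈ Finset.range (ℓ (k+1)), (max (N k x j) 0)^2
            ≤ ca^2 * P * ∑ j ∈ Finset.range (ℓ (k+1)), Q k j := by
          rw [Finset.mul_sum]
          apply Finset.sum_le_sum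
          intro j hj
          calc (max (N k x j) 0)^2 ≤ ca^2 * Q k j * P := h2 j hj
            _ = ca^2 * P * Q k j := by ring
        have hcp : (1:ℝ) ≤ ca^2 * P := by nlinarith
        rw [hQcs]
        have hsn : 0 ≤ ∑ j ∈ Finset.range (ℓ (k+1)), Q k j :=
          Finset.sum_nonneg fun j _ => hQnn k j
        nlinarith
      calc (bv (k+1) i + ∑ j ∈ Finset.range (ℓ (k+1)), w (k+1) i j * max (N k x j) 0)^2
          ≤ ((bv (k+1) i)^2 + ∑ j ∈ Finset.range (ℓ (k+1)), (w (k+1) i j)^2)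
            * (1 + ∑ j ∈ Finset.range (ℓ (k+1)), (max (N k x j) 0)^2) := h1
        _ = Q (k+1) i * (1 + ∑ j ∈ Finset.range (ℓ (k+1)), (max (N k x j) 0)^2) := by
            rw [hQ]
        _ ≤ Q (k+1) i * (ca^2 * P * Qc (k+1)) :=
            mul_le_mul_of_nonneg_left h3 (hQnn (k+1) i)
        _ ≤ ca^2 * Q (k+1) i * ∏ p ∈ Finset.range (k+2), (((ℓ p : ℝ) + 1) * Qc p) := by
            rw [Finset.prod_range_succ, ← hP]
            have hQck : 0 ≤ Qc (k+1) := le_trans zero_le_one (hQc1 (k+1))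
            have h4 : Qc (k+1) ≤ ((ℓ (k+1) : ℝ) + 1) * Qc (k+1) := by
              nlinarith [(Nat.cast_nonneg (ℓ (k+1)) : (0:ℝ) ≤ (ℓ (k+1) : ℝ))]
            have hPn : (0:ℝ) ≤ P := le_trans zero_le_one hP1
            have h5 : 0 ≤ ca^2 * Q (k+1) i * P := mul_nonneg (mul_nonneg (sq_nonneg ca) (hQnn (k+1) i)) hPn
            nlinarith [hQnn (k+1) i, sq_nonneg ca, hP1]
    -- end
  intro k _ i hi x hx
  exact ⟨hmax _, main k i hi x hx⟩
end

section
/- Let L ∈ ℕ, (ℓ_k) ⊆ ℕ, θ ∈ ℝ^d with associated weight matrices w^{n,θ} ∈ ℝ^{ℓ_n×ℓ_{n-1}}. Then for all K ∈ {1,…,L}, k ∈ {1,…,K}, i ∈ {1,…,ℓ_k} it holds that Σ over all tuples (v_k,…,v_K) with v_w ∈ {1,…,ℓ_w} of [1_{v_k = i}] ∏_{n=k+1}^{K} |w^{n,θ}_{v_n, v_{n-1}}|² ≤ ‖θ‖^{2(K-k)}. -/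
/-- Path-sum estimate for products of network weights: for `1 ≤ k ≤ K ≤ L` and
`i < ℓ_k`, the sum over all index paths `(v_k = i, v_{k+1}, …, v_K)` through layers
`k,…,K` of the squared products `∏_{n=k+1}^{K} |w^n_{v_n, v_{n-1}}|²` is at most
`‖θ‖^{2(K-k)}`. The path sum `S k K i` is characterized by `S k k i = 1` and
`S k K i = Σ_{v < ℓ_{k+1}} |w^{k+1}_{v,i}|² S (k+1) K v` for `k < K`, and
`normsq = ‖θ‖²` is the sum of squares of all network parameters
(here `w n` is the weight matrix `w^{n,θ} ∈ ℝ^{ℓ_n × ℓ_{n-1}}` and `bv n` the bias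
vector of layer `n`, for `n = 1,…,L`). -/
theorem stmt_12 (L : ℕ) (hL : 0 < L) (ℓ : ℕ → ℕ)
    (w : ℕ → ℕ → ℕ → ℝ) (bv : ℕ → ℕ → ℝ)
    (normsq : ℝ)
    (hnorm : normsq = ∑ n ∈ Finset.Icc 1 L,
      ((∑ i ∈ Finset.range (ℓ n), (bv n i)^2) +
       ∑ i ∈ Finset.range (ℓ n), ∑ j ∈ Finset.range (ℓ (n-1)), (w n i j)^2))
    (S : ℕ → ℕ → ℕ → ℝ)
    (hSdiag : ∀ k i, S k k i = 1)
    (hSstep : ∀ k K i, k < K →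
      S k K i = ∑ v ∈ Finset.range (ℓ (k+1)), (w (k+1) v i)^2 * S (k+1) K v) :
    ∀ K ≤ L, ∀ k, 1 ≤ k → k ≤ K → ∀ i < ℓ k, S k K i ≤ normsq ^ (K - k) := by

  intro K hK
  have hnn : 0 ≤ normsq := by rw [hnorm]; positivity
  have key : ∀ k, k + 1 ≤ L → ∀ i < ℓ k,
      (∑ v ∈ Finset.range (ℓ (k+1)), (w (k+1) v i)^2) ≤ normsq := by
    intro k hkL i hi
    rw [hnorm]
    have h1 : (∑ v ∈ Finset.range (ℓ (k+1)), (w (k+1) v i)^2) ≤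
        (∑ v ∈ Finset.range (ℓ (k+1)), ∑ j ∈ Finset.range (ℓ k), (w (k+1) v j)^2) := by
      apply Finset.sum_le_sum
      intro v _
      exact Finset.single_le_sum (f := fun j => (w (k+1) v j)^2) (fun j _ => sq_nonneg _) (Finset.mem_range.mpr hi)
    calc (∑ v ∈ Finset.range (ℓ (k+1)), (w (k+1) v i)^2)
        ≤ (∑ v ∈ Finset.range (ℓ (k+1)), (bv (k+1) v)^2) +
          ∑ v ∈ Finset.range (ℓ (k+1)), ∑ j ∈ Finset.range (ℓ k), (w (k+1) v j)^2 := by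
          have hbv : (0:ℝ) ≤ ∑ v ∈ Finset.range (ℓ (k+1)), (bv (k+1) v)^2 := by positivity
          linarith
      _ ≤ ∑ n ∈ Finset.Icc 1 L, ((∑ i ∈ Finset.range (ℓ n), (bv n i)^2) +
          ∑ i ∈ Finset.range (ℓ n), ∑ j ∈ Finset.range (ℓ (n-1)), (w n i j)^2) := by
          have hmem : k + 1 ∈ Finset.Icc 1 L := Finset.mem_Icc.mpr ⟨by omega, hkL⟩
          have := Finset.single_le_sum (f := fun n => (∑ i ∈ Finset.range (ℓ n), (bv n i)^2) +
            ∑ i ∈ Finset.range (ℓ n), ∑ j ∈ Finset.range (ℓ (n-1)), (w n i j)^2)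
            (fun n _ => by positivity) hmem
          simpa using this
  suffices h : ∀ m k, K - k = m → 1 ≤ k → k ≤ K → ∀ i < ℓ k, S k K i ≤ normsq ^ (K - k) by
    intro k h1 h2 i hi; exact h _ k rfl h1 h2 i hi
  intro m
  induction m with
  | zero =>
    intro k hm h1 h2 i hi
    have : k = K := by omega
    subst this
    rw [hSdiag, hm]
    simp
  | succ n ih =>
    intro k hm h1 h2 i hi
    have hk : k < K := by omega
    rw [hSstep k K i hk]
    have hstep : ∀ v ∈ Finset.range (ℓ (k+1)),
        (w (k+1) v i)^2 * S (k+1) K v ≤ (w (k+1) v i)^2 * normsq ^ n := by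
      intro v hv
      have hS := ih (k+1) (by omega) (by omega) (by omega) v (Finset.mem_range.mp hv)
      have : S (k+1) K v ≤ normsq ^ n := by
        have : K - (k+1) = n := by omega
        rwa [this] at hS
      exact mul_le_mul_of_nonneg_left this (sq_nonneg _)
    calc (∑ v ∈ Finset.range (ℓ (k+1)), (w (k+1) v i)^2 * S (k+1) K v)
        ≤ ∑ v ∈ Finset.range (ℓ (k+1)), (w (k+1) v i)^2 * normsq ^ n :=
          Finset.sum_le_sum hstep
      _ = (∑ v ∈ Finset.range (ℓ (k+1)), (w (k+1) v i)^2) * normsq ^ n := by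
          rw [Finset.sum_mul]
      _ ≤ normsq * normsq ^ n :=
          mul_le_mul_of_nonneg_right (key k (by omega) i hi) (pow_nonneg hnn n)
      _ = normsq ^ (K - k) := by rw [← pow_succ']; congr 1; omega
end

section
/- Let d ∈ ℕ, L ∈ [1,∞), c ∈ [0,∞), let V: ℝ^d → [0,∞) and ℒ: ℝ^d → [0,∞) and G: ℝ^d → ℝ^d satisfy for all γ ∈ [0,∞) and θ ∈ ℝ^d that V(θ − γG(θ)) − V(θ) ≤ 4L(γ²·c·(2V(θ) + 1)^{L-1} − γ)·ℒ(θ). Let (γ_n) ⊆ [0,∞) and (Θ_n) ⊆ ℝ^d satisfy Θ_{n+1} = Θ_n − γ_n G(Θ_n) and sup_n γ_n ≤ (c·(2V(Θ₀)+1)^{L-1})^{-1}. Then for every n ∈ ℕ₀ it holds that V(Θ_{n+1}) − V(Θ_n) ≤ −4Lγ_n(1 − (sup_m γ_m)·c·(2V(Θ₀)+1)^{L-1})·ℒ(Θ_n) ≤ 0; in particular V(Θ_n) ≤ V(Θ₀) for all n. -/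
/-- Abstract recursive Lyapunov descent estimate for GD-type iterations: the one-step
descent estimate together with the smallness condition on the learning rates yields
`V(Θ_{n+1}) − V(Θ_n) ≤ −4Lγ_n(1 − (sup_m γ_m)·c·(2V(Θ₀)+1)^{L−1})·ℒ(Θ_n) ≤ 0`,
and in particular `V(Θ_n) ≤ V(Θ₀)` for all `n`. -/
theorem stmt_14 (d : ℕ) (L : ℝ) (hL : 1 ≤ L) (c : ℝ) (hc : 0 ≤ c)
    (V : EuclideanSpace ℝ (Fin d) → ℝ) (hV : ∀ θ, 0 ≤ V θ)
    (Lo : EuclideanSpace ℝ (Fin d) → ℝ) (hLo : ∀ θ, 0 ≤ Lo θ)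
    (G : EuclideanSpace ℝ (Fin d) → EuclideanSpace ℝ (Fin d))
    (hstep : ∀ γ : ℝ, 0 ≤ γ → ∀ θ,
      V (θ - γ • G θ) - V θ ≤ 4*L*(γ^2 * c * (2 * V θ + 1) ^ (L - 1) - γ) * Lo θ)
    (γ : ℕ → ℝ) (hγ : ∀ n, 0 ≤ γ n)
    (Θ : ℕ → EuclideanSpace ℝ (Fin d))
    (hΘ : ∀ n, Θ (n+1) = Θ n - γ n • G (Θ n))
    (hsmall : ∀ n, γ n ≤ (c * (2 * V (Θ 0) + 1) ^ (L - 1))⁻¹) :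
    (∀ n : ℕ,
      V (Θ (n+1)) - V (Θ n) ≤
        -(4*L) * γ n * (1 - (⨆ m, γ m) * c * (2 * V (Θ 0) + 1) ^ (L - 1)) * Lo (Θ n) ∧
      V (Θ (n+1)) - V (Θ n) ≤ 0) ∧
    (∀ n : ℕ, V (Θ n) ≤ V (Θ 0)) := by
  have hV0 : 0 ≤ V (Θ 0) := hV _
  set K0 : ℝ := (2 * V (Θ 0) + 1) ^ (L - 1) with hK0def
  have hK0 : 0 ≤ K0 := Real.rpow_nonneg (by linarith) _
  have hbdd : BddAbove (Set.range γ) :=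
    ⟨(c * K0)⁻¹, by rintro _ ⟨n, rfl⟩; exact hsmall n⟩
  have hSle : ∀ n, γ n ≤ ⨆ m, γ m := fun n => le_ciSup hbdd n
  set S : ℝ := ⨆ m, γ m with hSdef
  have hS0 : 0 ≤ S := le_trans (hγ 0) (hSle 0)
  have hSK : S * (c * K0) ≤ 1 := by
    rcases (mul_nonneg hc hK0).eq_or_lt with h | h
    · rw [← h, mul_zero]; norm_num
    · have h1 : S ≤ (c * K0)⁻¹ := ciSup_le hsmall
      calc S * (c * K0) ≤ (c * K0)⁻¹ * (c * K0) := by nlinarith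
        _ = 1 := inv_mul_cancel₀ (ne_of_gt h)
  have key : ∀ n, V (Θ n) ≤ V (Θ 0) →
      V (Θ (n+1)) - V (Θ n) ≤ -(4*L) * γ n * (1 - S * c * K0) * Lo (Θ n) := by
    intro n hn
    have h1 := hstep (γ n) (hγ n) (Θ n)
    rw [← hΘ n] at h1
    have hVn : 0 ≤ V (Θ n) := hV _
    have hKn : (2 * V (Θ n) + 1) ^ (L - 1) ≤ K0 :=
      Real.rpow_le_rpow (by linarith) (by linarith) (by linarith)
    have hKnn : (0:ℝ) ≤ (2 * V (Θ n) + 1) ^ (L - 1) :=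
      Real.rpow_nonneg (by linarith) _
    have h2 : γ n ^ 2 * c * (2 * V (Θ n) + 1) ^ (L - 1) ≤ γ n * (S * c * K0) := by
      have hs := hSle n
      have hg := hγ n
      nlinarith [mul_le_mul hs hKn hKnn hS0, mul_nonneg hg hc]
    have hLon := hLo (Θ n)
    have h4L : (0:ℝ) ≤ 4 * L := by linarith
    calc V (Θ (n+1)) - V (Θ n)
        ≤ 4*L*(γ n^2 * c * (2 * V (Θ n) + 1) ^ (L - 1) - γ n) * Lo (Θ n) := h1
      _ ≤ 4*L*(γ n * (S * c * K0) - γ n) * Lo (Θ n) := by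
            have h3 : 4*L*(γ n^2 * c * (2 * V (Θ n) + 1) ^ (L - 1) - γ n) ≤
                4*L*(γ n * (S * c * K0) - γ n) :=
              mul_le_mul_of_nonneg_left (by linarith) h4L
            exact mul_le_mul_of_nonneg_right h3 hLon
      _ = -(4*L) * γ n * (1 - S * c * K0) * Lo (Θ n) := by ring
  have hnonneg : 0 ≤ 1 - S * c * K0 := by
    have : S * c * K0 = S * (c * K0) := by ring
    linarith [hSK, this ▸ hSK]
  have hnonpos : ∀ n, -(4*L) * γ n * (1 - S * c * K0) * Lo (Θ n) ≤ 0 := by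
    intro n
    have h4L : (0:ℝ) ≤ 4 * L := by linarith
    nlinarith [mul_nonneg (mul_nonneg (mul_nonneg h4L (hγ n)) hnonneg) (hLo (Θ n))]
  have mono : ∀ n, V (Θ n) ≤ V (Θ 0) := by
    intro n
    induction n with
    | zero => exact le_refl _
    | succ n ih =>
      have := key n ih
      have := hnonpos n
      linarith
  refine ⟨fun n => ?_, mono⟩
  have h1 := key n (mono n)
  exact ⟨h1, le_trans h1 (hnonpos n)⟩
end

section
/- Let d ∈ ℕ, η ∈ (0,∞), let V: ℝ^d → ℝ be bounded below by −C for some C ≥ 0, let ℒ: ℝ^d → [0,∞), let (γ_n) ⊆ [0,∞) with Σ_{n=0}^∞ γ_n = ∞, and let (Θ_n) ⊆ ℝ^d satisfy for all n ∈ ℕ₀ that η·γ_n·ℒ(Θ_n) ≤ V(Θ_n) − V(Θ_{n+1}). Then Σ_{n=0}^∞ γ_n ℒ(Θ_n) ≤ (V(Θ₀) + C)/η < ∞ and consequently lim inf_{n→∞} ℒ(Θ_n) = 0. -/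
/-! Telescoping `η a_n ≤ v_n - v_{n+1}` bounds every partial sum of `a` by `(v_0 + C)/η`. If
`ℓ_n ≥ ε` held eventually, then `γ_n ≤ ε⁻¹ γ_n ℓ_n` eventually, and `Σ γ_n` would converge. -/

open Filter Finset

theorem sum_range_le_div_of_decrease {a v : ℕ → ℝ} {η C : ℝ} (hη : 0 < η) (hv : ∀ n, -C ≤ v n)
    (hdecr : ∀ n, η * a n ≤ v n - v (n + 1)) (N : ℕ) :
    ∑ n ∈ range N, a n ≤ (v 0 + C) / η := by
  rw [le_div_iff₀' hη, mul_sum]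
  have htelescope : ∑ n ∈ range N, (v n - v (n + 1)) = v 0 - v N := sum_range_sub' v N
  linarith [sum_le_sum fun n (_ : n ∈ range N) => hdecr n, hv N]

theorem summable_and_tsum_le_div_of_decrease {a v : ℕ → ℝ} {η C : ℝ} (hη : 0 < η)
    (hv : ∀ n, -C ≤ v n) (hdecr : ∀ n, η * a n ≤ v n - v (n + 1)) (ha : ∀ n, 0 ≤ a n) :
    Summable a ∧ ∑' n, a n ≤ (v 0 + C) / η :=
  have hpartial := sum_range_le_div_of_decrease hη hv hdecr
  have hsum := summable_of_sum_range_le ha hpartial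
  ⟨hsum, hsum.tsum_le_of_sum_range_le hpartial⟩

theorem frequently_lt_of_summable_mul {γ ℓ : ℕ → ℝ} (hγ : ∀ n, 0 ≤ γ n) (hγdiv : ¬Summable γ)
    (hsum : Summable fun n => γ n * ℓ n) {ε : ℝ} (hε : 0 < ε) : ∃ᶠ n in atTop, ℓ n < ε := by
  contrapose! hγdiv
  refine Summable.of_norm_bounded_eventually_nat (hsum.mul_left ε⁻¹) ?_
  filter_upwards [hγdiv] with n hn
  rw [Real.norm_of_nonneg (hγ n), le_inv_mul_iff₀ hε]
  nlinarith [hγ n]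

theorem liminf_eq_zero_of_frequently_lt {ι : Type*} {l : Filter ι} {ℓ : ι → ℝ}
    (hℓ : ∀ i, 0 ≤ ℓ i) (h : ∀ ε > 0, ∃ᶠ i in l, ℓ i < ε) : liminf ℓ l = 0 := by
  have hbdd : IsBoundedUnder (· ≥ ·) l ℓ := isBoundedUnder_of_eventually_ge (.of_forall hℓ)
  have hcobdd : IsCoboundedUnder (· ≥ ·) l ℓ :=
    .of_frequently_le ((h 1 one_pos).mono fun _ => le_of_lt)
  exact le_antisymm ((liminf_le_iff hcobdd hbdd).2 h) (le_liminf_of_le hcobdd (.of_forall hℓ))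

theorem stmt_15_general (d : ℕ) (η : ℝ) (hη : 0 < η) (C : ℝ)
    (V : EuclideanSpace ℝ (Fin d) → ℝ) (hVlb : ∀ θ, -C ≤ V θ)
    (Lo : EuclideanSpace ℝ (Fin d) → ℝ) (hLo : ∀ θ, 0 ≤ Lo θ)
    (γ : ℕ → ℝ) (hγ : ∀ n, 0 ≤ γ n)
    (hdiv : Filter.Tendsto (fun N => ∑ n ∈ Finset.range N, γ n) Filter.atTop Filter.atTop)
    (Θ : ℕ → EuclideanSpace ℝ (Fin d))
    (hstep : ∀ n, η * γ n * Lo (Θ n) ≤ V (Θ n) - V (Θ (n+1))) :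
    Summable (fun n => γ n * Lo (Θ n)) ∧
    (∑' n, γ n * Lo (Θ n)) ≤ (V (Θ 0) + C) / η ∧
    Filter.liminf (fun n => Lo (Θ n)) Filter.atTop = 0 := by
  obtain ⟨hsum, htsum⟩ := summable_and_tsum_le_div_of_decrease (a := fun n => γ n * Lo (Θ n))
    (v := fun n => V (Θ n)) hη (fun n => hVlb (Θ n)) (fun n => mul_assoc η (γ n) _ ▸ hstep n)
    (fun n => mul_nonneg (hγ n) (hLo (Θ n)))
  have hγ_not_summable : ¬Summable γ :=
    fun h => (summable_iff_not_tendsto_nat_atTop_of_nonneg hγ).1 h hdiv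
  exact ⟨hsum, htsum, liminf_eq_zero_of_frequently_lt (fun n => hLo (Θ n))
    fun _ hε => frequently_lt_of_summable_mul hγ hγ_not_summable hsum hε⟩

/-- Abstract summability argument: telescoping the Lyapunov decrease
`η γ_n ℒ(Θ_n) ≤ V(Θ_n) − V(Θ_{n+1})` with `V ≥ −C` gives
`Σ_n γ_n ℒ(Θ_n) ≤ (V(Θ₀)+C)/η < ∞`, and together with `Σ_n γ_n = ∞` this forces
`lim inf_n ℒ(Θ_n) = 0`. -/
theorem stmt_15 (d : ℕ) (η : ℝ) (hη : 0 < η) (C : ℝ) (hC : 0 ≤ C)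
    (V : EuclideanSpace ℝ (Fin d) → ℝ) (hVlb : ∀ θ, -C ≤ V θ)
    (Lo : EuclideanSpace ℝ (Fin d) → ℝ) (hLo : ∀ θ, 0 ≤ Lo θ)
    (γ : ℕ → ℝ) (hγ : ∀ n, 0 ≤ γ n)
    (hdiv : Filter.Tendsto (fun N => ∑ n ∈ Finset.range N, γ n) Filter.atTop Filter.atTop)
    (Θ : ℕ → EuclideanSpace ℝ (Fin d))
    (hstep : ∀ n, η * γ n * Lo (Θ n) ≤ V (Θ n) - V (Θ (n+1))) :
    Summable (fun n => γ n * Lo (Θ n)) ∧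
    (∑' n, γ n * Lo (Θ n)) ≤ (V (Θ 0) + C) / η ∧
    Filter.liminf (fun n => Lo (Θ n)) Filter.atTop = 0 :=
  stmt_15_general d η hη C V hVlb Lo hLo γ hγ hdiv Θ hstep
end

section
/- Let d ∈ ℕ, let ℒ: ℝ^d → [0,∞) be Lipschitz continuous on a set containing the sequence (Θ_n)_{n∈ℕ₀} ⊆ ℝ^d, assume sup_n ‖Θ_{n+1} − Θ_n‖ ≤ 𝔇·γ_n for some 𝔇 ∈ [0,∞) and a sequence (γ_n) ⊆ [0,∞), assume Σ_{n=0}^∞ γ_n ℒ(Θ_n) < ∞, and assume lim inf_{n→∞} ℒ(Θ_n) = 0. Then lim sup_{n→∞} ℒ(Θ_n) = 0, i.e., ℒ(Θ_n) → 0. -/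
/-- Abstract convergence-by-contradiction argument for GD: if the risk `ℒ` is
Lipschitz along the iterates, the step sizes control the increments, `Σ γ_n ℒ(Θ_n) < ∞`,
and `lim inf ℒ(Θ_n) = 0`, then `lim sup ℒ(Θ_n) = 0`, i.e. `ℒ(Θ_n) → 0`. -/
theorem stmt_16 (d : ℕ)
    (Lo : EuclideanSpace ℝ (Fin d) → ℝ) (hLo : ∀ θ, 0 ≤ Lo θ)
    (K : ℝ) (hK : 0 ≤ K)
    (Θ : ℕ → EuclideanSpace ℝ (Fin d))
    (hLip : ∀ m n : ℕ, |Lo (Θ m) - Lo (Θ n)| ≤ K * ‖Θ m - Θ n‖)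
    (D : ℝ) (hD : 0 ≤ D) (γ : ℕ → ℝ) (hγ : ∀ n, 0 ≤ γ n)
    (hstep : ∀ n, ‖Θ (n+1) - Θ n‖ ≤ D * γ n)
    (hsum : Summable (fun n => γ n * Lo (Θ n)))
    (hliminf : Filter.liminf (fun n => Lo (Θ n)) Filter.atTop = 0) :
    Filter.limsup (fun n => Lo (Θ n)) Filter.atTop = 0 ∧
    Filter.Tendsto (fun n => Lo (Θ n)) Filter.atTop (nhds 0) := by
  set a : ℕ → ℝ := fun n => Lo (Θ n) with ha
  set C : ℝ := K * D with hCdef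
  have hC0 : 0 ≤ C := mul_nonneg hK hD
  have ha0 : ∀ n, 0 ≤ a n := fun n => hLo _
  have hstep1 : ∀ n, |a (n+1) - a n| ≤ C * γ n := by
    intro n
    calc |a (n+1) - a n| ≤ K * ‖Θ (n+1) - Θ n‖ := hLip (n+1) n
      _ ≤ K * (D * γ n) := by
          have := hstep n
          exact mul_le_mul_of_nonneg_left this hK
      _ = C * γ n := by ring
  have key : ∀ n, a n ^ 2 - a (n+1) ^ 2 ≤ 2 * C * (γ n * a n) := by
    intro n
    have habs := abs_le.mp (hstep1 n)
    rcases le_or_gt (a n) (a (n+1)) with h | h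
    · have h2 : a n ^ 2 ≤ a (n+1) ^ 2 := by nlinarith [ha0 n]
      nlinarith [mul_nonneg hC0 (mul_nonneg (hγ n) (ha0 n))]
    · nlinarith [ha0 n, ha0 (n+1), habs.1, habs.2]
  have tele : ∀ m k, m ≤ k →
      a m ^ 2 ≤ a k ^ 2 + 2 * C * ∑ j ∈ Finset.Ico m k, γ j * a j := by
    intro m k hmk
    induction k, hmk using Nat.le_induction with
    | base => simp
    | succ k hmk ih =>
      rw [Finset.sum_Ico_succ_top hmk]
      have hk := key k
      have : 2 * C * (∑ j ∈ Finset.Ico m k, γ j * a j + γ k * a k) =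
          2 * C * ∑ j ∈ Finset.Ico m k, γ j * a j + 2 * C * (γ k * a k) := by ring
      rw [this]
      linarith
  set T : ℝ := ∑' n, γ n * a n with hT
  set S : ℕ → ℝ := fun m => ∑ j ∈ Finset.range m, γ j * a j with hS
  have hST : Filter.Tendsto S Filter.atTop (nhds T) := hsum.hasSum.tendsto_sum_nat
  have hSk : ∀ k, S k ≤ T :=
    fun k => Summable.sum_le_tsum (Finset.range k)
      (fun j _ => mul_nonneg (hγ j) (ha0 j)) hsum
  have main : ∀ m k, m ≤ k → a m ^ 2 ≤ a k ^ 2 + 2 * C * (T - S m) := by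
    intro m k hmk
    have h1 := tele m k hmk
    have h2 : ∑ j ∈ Finset.Ico m k, γ j * a j = S k - S m := by
      simp [hS, Finset.sum_Ico_eq_sub _ hmk]
    rw [h2] at h1
    have h3 : S k - S m ≤ T - S m := by linarith [hSk k]
    nlinarith [h1, h3]
  have hfreq : ∀ δ : ℝ, 0 < δ → ∃ᶠ k in Filter.atTop, a k < δ := by
    intro δ hδ
    by_contra hcon
    rw [Filter.not_frequently] at hcon
    obtain ⟨N, hN⟩ := Filter.eventually_atTop.mp hcon
    have hN' : ∀ k, N ≤ k → δ ≤ a k := fun k hk => not_lt.mp (hN k hk)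
    have hbd : ∀ k, N ≤ k →
        a k ≤ a N + (C/δ) * ∑ j ∈ Finset.Ico N k, γ j * a j := by
      intro k hk
      induction k, hk using Nat.le_induction with
      | base => simp
      | succ k hk ih =>
        rw [Finset.sum_Ico_succ_top hk]
        have hstepk := (abs_le.mp (hstep1 k)).2
        have hγa : C * γ k ≤ (C/δ) * (γ k * a k) := by
          rw [div_mul_eq_mul_div, le_div_iff₀ hδ]
          have h1 : δ * γ k ≤ a k * γ k :=
            mul_le_mul_of_nonneg_right (hN' k hk) (hγ k)
          nlinarith [hγ k]
        have hexp : (C/δ) * (∑ j ∈ Finset.Ico N k, γ j * a j + γ k * a k) =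
            (C/δ) * ∑ j ∈ Finset.Ico N k, γ j * a j + (C/δ) * (γ k * a k) := by
          ring
        rw [hexp]
        linarith
    have hbd' : ∀ k, N ≤ k → a k ≤ a N + (C/δ) * (T - S N) := by
      intro k hk
      have h1 := hbd k hk
      have h2 : ∑ j ∈ Finset.Ico N k, γ j * a j = S k - S N := by
        simp [hS, Finset.sum_Ico_eq_sub _ hk]
      rw [h2] at h1
      have h3 : (C/δ) * (S k - S N) ≤ (C/δ) * (T - S N) := by
        apply mul_le_mul_of_nonneg_left _ (by positivity)
        linarith [hSk k]
      linarith
    have hb0 : Filter.IsBoundedUnder (· ≤ ·) Filter.atTop a :=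
      ⟨a N + (C/δ) * (T - S N),
        Filter.eventually_map.mpr (Filter.eventually_atTop.mpr ⟨N, hbd'⟩)⟩
    have hb : Filter.IsCoboundedUnder (· ≥ ·) Filter.atTop a :=
      hb0.isCoboundedUnder_ge
    have hfr : ∃ᶠ k in Filter.atTop, a k < δ :=
      Filter.frequently_lt_of_liminf_lt hb (by rw [hliminf]; exact hδ)
    obtain ⟨k, hk1, hk2⟩ := (hfr.and_eventually hcon).exists
    exact hk2 hk1
  have htend : Filter.Tendsto a Filter.atTop (nhds 0) := by
    rw [Metric.tendsto_atTop]
    intro ε hε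
    have hδ : (0:ℝ) < ε ^ 2 / (2 * (2 * C + 1)) := by positivity
    have hev : ∀ᶠ m in Filter.atTop, T - S m < ε ^ 2 / (2 * (2 * C + 1)) := by
      have := Metric.tendsto_atTop.mp hST (ε ^ 2 / (2 * (2 * C + 1))) hδ
      obtain ⟨N, hN⟩ := this
      refine Filter.eventually_atTop.mpr ⟨N, fun m hm => ?_⟩
      have := hN m hm
      rw [Real.dist_eq] at this
      have := abs_lt.mp this
      linarith [this.1]
    obtain ⟨N, hN⟩ := Filter.eventually_atTop.mp hev
    refine ⟨N, fun m hm => ?_⟩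
    obtain ⟨k, hk, hak⟩ := (Filter.frequently_atTop.mp (hfreq (ε/2) (by linarith))) m
    have h1 := main m k hk
    have h2 := hN m hm
    have h3 : a k ^ 2 < (ε/2) ^ 2 := by nlinarith [ha0 k]
    have h4 : 2 * C * (T - S m) ≤ 2 * C * (ε ^ 2 / (2 * (2 * C + 1))) :=
      mul_le_mul_of_nonneg_left (le_of_lt h2) (by linarith)
    have h5 : 2 * C * (ε ^ 2 / (2 * (2 * C + 1))) < ε ^ 2 / 2 := by
      have hpos : (0:ℝ) < 2 * (2 * C + 1) := by linarith
      rw [← mul_div_assoc, div_lt_div_iff₀ hpos (by norm_num : (0:ℝ) < 2)]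
      nlinarith [pow_pos hε 2]
    have : a m ^ 2 < ε ^ 2 := by nlinarith
    rw [Real.dist_eq, sub_zero, abs_of_nonneg (ha0 m)]
    nlinarith [ha0 m]
  exact ⟨htend.limsup_eq, htend⟩
end

section
/- Let d ∈ ℕ, L ∈ ℕ, f₀ ∈ ℝ^m, let V: ℝ^d → ℝ be the Lyapunov function satisfying (1/2)‖θ‖² − 2L²‖f₀‖² ≤ V(θ) for all θ, let ℒ: ℝ^d → [0,∞), and let Θ ∈ C([0,∞), ℝ^d) satisfy for all t ∈ [0,∞) that V(Θ_t) = V(Θ₀) − 4L∫₀^t ℒ(Θ_s) ds, and assume t ↦ ℒ(Θ_t) is non-increasing and V(Θ₀) ≤ 2L‖Θ₀‖² + L‖f₀‖². Then for all t ∈ (0,∞): ℒ(Θ_t) ≤ (1/(2t))(‖Θ₀‖² + 2L‖f₀‖²), and consequently lim sup_{t→∞} ℒ(Θ_t) = 0. -/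
/-- Abstract gradient flow convergence with rate 1: if the Lyapunov identity
`V(Θ_t) = V(Θ₀) − 4L∫₀^t ℒ(Θ_s) ds` holds, `V` satisfies the two-sided bounds
`(1/2)‖θ‖² − 2L²‖f₀‖² ≤ V(θ)` and `V(Θ₀) ≤ 2L‖Θ₀‖² + L‖f₀‖²`, and `t ↦ ℒ(Θ_t)` is
non-increasing, then `ℒ(Θ_t) ≤ (1/(2t))(‖Θ₀‖² + 2L‖f₀‖²)` for `t > 0` and
`lim sup_{t→∞} ℒ(Θ_t) = 0`. -/
theorem stmt_17 (d m L : ℕ) (hL : 0 < L)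
    (f0 : EuclideanSpace ℝ (Fin m))
    (V : EuclideanSpace ℝ (Fin d) → ℝ)
    (hVlb : ∀ θ, (1/2) * ‖θ‖^2 - 2*(L:ℝ)^2 * ‖f0‖^2 ≤ V θ)
    (Lo : EuclideanSpace ℝ (Fin d) → ℝ) (hLo : ∀ θ, 0 ≤ Lo θ)
    (Θ : ℝ → EuclideanSpace ℝ (Fin d))
    (hcont : ContinuousOn Θ (Set.Ici (0:ℝ)))
    (hident : ∀ t ≥ (0:ℝ), V (Θ t) = V (Θ 0) - 4*(L:ℝ) * ∫ s in (0:ℝ)..t, Lo (Θ s))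
    (hmono : ∀ s t : ℝ, 0 ≤ s → s ≤ t → Lo (Θ t) ≤ Lo (Θ s))
    (hV0 : V (Θ 0) ≤ 2*(L:ℝ) * ‖Θ 0‖^2 + (L:ℝ) * ‖f0‖^2) :
    (∀ t : ℝ, 0 < t → Lo (Θ t) ≤ (1/(2*t)) * (‖Θ 0‖^2 + 2*(L:ℝ) * ‖f0‖^2)) ∧
    Filter.limsup (fun t => Lo (Θ t)) Filter.atTop = 0 := by
  have hL1 : (1:ℝ) ≤ (L:ℝ) := by exact_mod_cast hL
  have key : ∀ t : ℝ, 0 < t → Lo (Θ t) ≤ (1/(2*t)) * (‖Θ 0‖^2 + 2*(L:ℝ) * ‖f0‖^2) := by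
    intro t ht
    have hint : IntervalIntegrable (fun s => Lo (Θ s)) MeasureTheory.volume 0 t := by
      apply AntitoneOn.intervalIntegrable
      intro a ha b hb hab
      rw [Set.uIcc_of_le ht.le] at ha hb
      exact hmono a b ha.1 hab
    have hlow : t * Lo (Θ t) ≤ ∫ s in (0:ℝ)..t, Lo (Θ s) := by
      have := intervalIntegral.integral_mono_on ht.le
        (intervalIntegrable_const (c := Lo (Θ t))) hint
        (fun s hs => hmono s t hs.1 hs.2)
      simpa [mul_comm] using this
    have hub : (∫ s in (0:ℝ)..t, Lo (Θ s)) ≤ (1/2) * ‖Θ 0‖^2 + (L:ℝ) * ‖f0‖^2 := by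
      have h1 := hident t ht.le
      have h2 := hVlb (Θ t)
      have h3 : -(2*(L:ℝ)^2 * ‖f0‖^2) ≤ V (Θ t) := by
        nlinarith [sq_nonneg ‖Θ t‖]
      have h4 : 4*(L:ℝ) * ∫ s in (0:ℝ)..t, Lo (Θ s)
          ≤ 2*(L:ℝ) * ‖Θ 0‖^2 + (L:ℝ) * ‖f0‖^2 + 2*(L:ℝ)^2 * ‖f0‖^2 := by
        nlinarith
      have hLpos : (0:ℝ) < 4*(L:ℝ) := by positivity
      have h5 : 4*(L:ℝ) * ∫ s in (0:ℝ)..t, Lo (Θ s)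
          ≤ 4*(L:ℝ) * ((1/2) * ‖Θ 0‖^2 + (L:ℝ) * ‖f0‖^2) := by
        refine h4.trans ?_
        nlinarith [mul_nonneg (sub_nonneg.mpr hL1) (sq_nonneg ‖f0‖), hL1, sq_nonneg ‖f0‖]
      exact (mul_le_mul_iff_right₀ hLpos).mp h5
    have ht' : 0 < 2 * t := by linarith
    rw [one_div, inv_mul_eq_div, le_div_iff₀ ht']
    nlinarith [hlow, hub]
  refine ⟨key, ?_⟩
  have htend : Filter.Tendsto (fun t => Lo (Θ t)) Filter.atTop (nhds 0) := by
    have h1 : Filter.Tendsto (fun t : ℝ => (1/(2*t)) * (‖Θ 0‖^2 + 2*(L:ℝ) * ‖f0‖^2))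
        Filter.atTop (nhds 0) := by
      have : Filter.Tendsto (fun t : ℝ => 1/(2*t)) Filter.atTop (nhds 0) := by
        simpa using (Filter.Tendsto.const_mul (1/2 : ℝ)
          (tendsto_inv_atTop_zero)).comp Filter.tendsto_id |>.congr
          (by intro x; simp [div_eq_mul_inv, mul_inv]; ring)
      simpa using this.mul_const (‖Θ 0‖^2 + 2*(L:ℝ) * ‖f0‖^2)
    apply tendsto_of_tendsto_of_tendsto_of_le_of_le' tendsto_const_nhds h1
    · exact Filter.Eventually.of_forall fun t => hLo _
    · filter_upwards [Filter.eventually_gt_atTop (0:ℝ)] with t ht using key t ht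
  exact htend.limsup_eq
end

section
/- Let L ∈ ℕ with L > 1, let μ be a finite nonzero measure on [a,b]^{ℓ₀}, let f: [a,b]^{ℓ₀} → ℝ^{ℓ_L} be measurable and μ-square-integrable with first component f₁, and let ξ = (ξ₁,…,ξ_{ℓ_L}) ∈ ℝ^{ℓ_L} with ξ₁ = (μ([a,b]^{ℓ₀}))^{-1} ∫ f₁ dμ. Then the risk function ℒ_∞(θ) = ∫_{[a,b]^{ℓ₀}} ‖N^{L,θ}_∞(x) − f(x)‖² μ(dx) of the depth-L ReLU network is not convex: there exist θ, ϑ ∈ ℝ^d with ℒ_∞((θ+ϑ)/2) = (ℒ_∞(θ) + ℒ_∞(ϑ))/2 + μ([a,b]^{ℓ₀})/16 > (ℒ_∞(θ) + ℒ_∞(ϑ))/2. -/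
open MeasureTheory

/-- Non-convexity of the risk function of a deep ReLU network (depth `L > 1`) over a
finite nonzero measure `μ` when the first component of `ξ` is the `μ`-mean of the first
component of the target `f`: there exist parameter vectors `p`, `q` whose midpoint has
risk exactly `(Risk p + Risk q)/2 + μ([a,b]^{ℓ₀})/16 > (Risk p + Risk q)/2`.
Parameters are encoded as pairs `(w, b)` where `w k i j` is the `(i,j)` weight and
`b k i` the `i`-th bias of layer `k+1`; `N p k x` is the (pre-activation) realization
up to layer `k+1` and `Risk p = ∫ ‖N^{L,p}(x) − f(x)‖² dμ`. -/
theorem stmt_18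
    (L : ℕ) (hL : 1 < L) (ℓ : ℕ → ℕ) (hℓ : ∀ k, 0 < ℓ k)
    (a b : ℝ) (hab : a < b)
    (μ : Measure (ℕ → ℝ)) [IsFiniteMeasure μ]
    (hsupp : ∀ᵐ x ∂μ, ∀ j < ℓ 0, x j ∈ Set.Icc a b)
    (m : ℝ) (hm : m = (μ Set.univ).toReal) (hm0 : 0 < m)
    (f : (ℕ → ℝ) → ℕ → ℝ)
    (hfmeas : ∀ i, Measurable fun x => f x i)
    (hfsq : ∀ i, Integrable (fun x => (f x i)^2) μ)
    (hfint : ∀ i, Integrable (fun x => f x i) μ)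
    (ξ : ℕ → ℝ) (hξ : ξ 0 * m = ∫ x, f x 0 ∂μ)
    (N : ((ℕ → ℕ → ℕ → ℝ) × (ℕ → ℕ → ℝ)) → ℕ → (ℕ → ℝ) → ℕ → ℝ)
    (hN0 : ∀ p x i, N p 0 x i = p.2 0 i + ∑ j ∈ Finset.range (ℓ 0), p.1 0 i j * x j)
    (hNs : ∀ p k x i, N p (k+1) x i =
      p.2 (k+1) i + ∑ j ∈ Finset.range (ℓ (k+1)), p.1 (k+1) i j * max (N p k x j) 0)
    (Risk : ((ℕ → ℕ → ℕ → ℝ) × (ℕ → ℕ → ℝ)) → ℝ)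
    (hRisk : ∀ p, Risk p = ∫ x, ∑ i ∈ Finset.range (ℓ L), (N p (L-1) x i - f x i)^2 ∂μ) :
    ∃ p q : (ℕ → ℕ → ℕ → ℝ) × (ℕ → ℕ → ℝ),
      Risk (fun k i j => (p.1 k i j + q.1 k i j)/2, fun k i => (p.2 k i + q.2 k i)/2)
        = (Risk p + Risk q)/2 + m/16 ∧
      (Risk p + Risk q)/2 + m/16 > (Risk p + Risk q)/2 := by
  set L1 := L - 1 with hL1d
  set L2 := L - 2 with hL2d
  have hL12 : L1 = L2 + 1 := by omega
  have hne : L2 ≠ L1 := by omega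
  set p : (ℕ → ℕ → ℕ → ℝ) × (ℕ → ℕ → ℝ) :=
    (fun _ _ _ => 0, fun k i => if k = L1 then ξ i else if k = L2 ∧ i = 0 then 1 else 0)
    with hp
  set q : (ℕ → ℕ → ℕ → ℝ) × (ℕ → ℕ → ℝ) :=
    (fun k i j => if k = L1 ∧ i = 0 ∧ j = 0 then 1 else 0,
     fun k i => if k = L1 then ξ i else 0) with hq
  refine ⟨p, q, ?_, by linarith⟩
  set r : (ℕ → ℕ → ℕ → ℝ) × (ℕ → ℕ → ℝ) :=
    (fun k i j => (p.1 k i j + q.1 k i j)/2, fun k i => (p.2 k i + q.2 k i)/2) with hr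
  -- layer L2 value when its weights vanish
  have hmidv : ∀ s : (ℕ → ℕ → ℕ → ℝ) × (ℕ → ℕ → ℝ), (∀ i j, s.1 L2 i j = 0) →
      ∀ x i, N s L2 x i = s.2 L2 i := by
    intro s hs x i
    match hc : L2 with
    | 0 => rw [hN0]; simp [hs]
    | Nat.succ k =>
      show N s (k+1) x i = s.2 (k+1) i
      rw [hNs]; simp [hs]
  have hout : ∀ s : (ℕ → ℕ → ℕ → ℝ) × (ℕ → ℕ → ℝ), (∀ i j, s.1 L2 i j = 0) → ∀ x i,
      N s L1 x i = s.2 L1 i + ∑ j ∈ Finset.range (ℓ L1), s.1 L1 i j * max (s.2 L2 j) 0 := by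
    intro s hs x i
    rw [hL12, hNs, ← hL12]
    congr 1
    refine Finset.sum_congr rfl fun j _ => ?_
    rw [hmidv s hs x j]
  have hp1 : ∀ i j, p.1 L2 i j = 0 := fun i j => rfl
  have hq1 : ∀ i j, q.1 L2 i j = 0 := by intro i j; simp [hq, hne]
  have hr1 : ∀ i j, r.1 L2 i j = 0 := by intro i j; simp [hr, hp, hq, hne]
  have hNp : ∀ x i, N p L1 x i = ξ i := by
    intro x i
    rw [hout p hp1]
    simp [hp]
  have hNq : ∀ x i, N q L1 x i = ξ i := by
    intro x i
    rw [hout q hq1]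
    simp [hq, hne]
  have hNr : ∀ x i, N r L1 x i = ξ i + if i = 0 then (1:ℝ)/4 else 0 := by
    intro x i
    rw [hout r hr1]
    have hterm : ∀ j, r.1 L1 i j * max (r.2 L2 j) 0
        = if j = 0 ∧ i = 0 then (1:ℝ)/4 else 0 := by
      intro j
      by_cases hj : j = 0 <;> by_cases hi : i = 0 <;>
        simp [hr, hp, hq, hne, hj, hi] <;> norm_num
    rw [Finset.sum_congr rfl fun j _ => hterm j]
    have h0 : (0:ℕ) ∈ Finset.range (ℓ L1) := Finset.mem_range.2 (hℓ L1)
    by_cases hi : i = 0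
    · simp only [hi, and_true]
      rw [Finset.sum_ite_eq' (Finset.range (ℓ L1)) 0 (fun _ => (1:ℝ)/4)]
      simp [h0, hr, hp, hq]
    · simp [hi, hr, hp, hq]
  have hpq : Risk p = Risk q := by
    rw [hRisk, hRisk]
    congr 1
    funext x
    exact Finset.sum_congr rfl fun i _ => by rw [hNp, hNq]
  have hterm : ∀ i, Integrable (fun x => (ξ i - f x i)^2) μ := by
    intro i
    have he : (fun x => (ξ i - f x i)^2)
        = fun x => (f x i)^2 + ((-2 * ξ i) * f x i + (ξ i)^2) := by funext x; ring
    rw [he]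
    exact (hfsq i).add (((hfint i).const_mul _).add (integrable_const _))
  have hg : Integrable (fun x => ∑ i ∈ Finset.range (ℓ L), (ξ i - f x i)^2) μ :=
    integrable_finset_sum _ fun i _ => hterm i
  have hh : Integrable (fun x => (1:ℝ)/16 + (ξ 0 - f x 0)/2) μ := by
    have he : (fun x => (1:ℝ)/16 + (ξ 0 - f x 0)/2)
        = fun x => ((1:ℝ)/16 + ξ 0/2) + (-(1:ℝ)/2) * f x 0 := by funext x; ring
    rw [he]
    exact (integrable_const _).add ((hfint 0).const_mul _)
  have hhint : ∫ x, ((1:ℝ)/16 + (ξ 0 - f x 0)/2) ∂μ = m/16 := by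
    have he : (fun x => (1:ℝ)/16 + (ξ 0 - f x 0)/2)
        = fun x => ((1:ℝ)/16 + ξ 0/2) + (-(1:ℝ)/2) * f x 0 := by funext x; ring
    rw [he, integral_add (integrable_const _) ((hfint 0).const_mul _), integral_const,
        integral_const_mul, ← hξ, measureReal_def, ← hm, smul_eq_mul]
    ring
  have hRr : Risk r = Risk p + m/16 := by
    rw [hRisk, hRisk]
    have hint : ∀ x, ∑ i ∈ Finset.range (ℓ L), (N r L1 x i - f x i)^2
        = (∑ i ∈ Finset.range (ℓ L), (ξ i - f x i)^2) + ((1:ℝ)/16 + (ξ 0 - f x 0)/2) := by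
      intro x
      have hstep : ∀ i ∈ Finset.range (ℓ L), (N r L1 x i - f x i)^2
          = (ξ i - f x i)^2 + (if i = 0 then (1:ℝ)/16 + (ξ 0 - f x 0)/2 else 0) := by
        intro i _
        rw [hNr]
        by_cases hi : i = 0
        · subst hi; norm_num; ring
        · simp [hi]
      rw [Finset.sum_congr rfl hstep, Finset.sum_add_distrib,
          Finset.sum_ite_eq' (Finset.range (ℓ L)) 0]
      simp [Finset.mem_range.2 (hℓ L)]
    simp_rw [hint]
    rw [integral_add hg hh, hhint]
    congr 1
    refine integral_congr_ae (Filter.Eventually.of_forall fun x => ?_)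
    exact (Finset.sum_congr rfl fun i _ => by rw [hNp]).symm
  rw [← hr] at *
  rw [hRr, hpq]
  ring
end
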